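/- Let t be a defined term of the lambda calculus with constructors. If the case-completion ⌈t⌉ reduces in one step by any rule other than CaseCase to a term t', then t' = ⌈t₀⌉ for some term t₀ with t → t₀. -/

import Mathlib

/- Terms of the lambda calculus with `n` constructors (de Bruijn indices).
`Ob n` plays the role of `Option (Tm n)`: a case-binding is a partial map
`Fin n → Ob n` from constructors to terms. -/
mutual
inductive Tm (n : ℕ) : Type where
  | var : ℕ → Tm n
  | app : Tm n → Tm n → Tm n
  | lam : Tm n → Tm n
  | cst : Fin n → Tm n
  | cas : (Fin n → Ob n) → Tm n → Tm n
inductive Ob (n : ℕ) : Type where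
  | none : Ob n
  | some : Tm n → Ob n
end

namespace LC

variable {n : ℕ}

/- Shift free de Bruijn indices `≥ k` by `d`. -/
mutual
def lift (d k : ℕ) : Tm n → Tm n
  | .var i => .var (if i < k then i else i + d)
  | .app t u => .app (lift d k t) (lift d k u)
  | .lam t => .lam (lift d (k+1) t)
  | .cst c => .cst c
  | .cas θ t => .cas (fun c => liftO d k (θ c)) (lift d k t)
def liftO (d k : ℕ) : Ob n → Ob n
  | .none => .none
  | .some t => .some (lift d k t)
end

/- Lift a case-binding (used for the CaseLam rule, where the bound variable
must not occur free in the binding). -/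
def liftB (θ : Fin n → Ob n) : Fin n → Ob n := fun c => liftO 1 0 (θ c)

/- Substitution of `u` for the variable `k` (capture-avoiding). -/
mutual
def subst (u : Tm n) (k : ℕ) : Tm n → Tm n
  | .var i => if i < k then .var i else if i = k then lift k 0 u else .var (i-1)
  | .app t v => .app (subst u k t) (subst u k v)
  | .lam t => .lam (subst u (k+1) t)
  | .cst c => .cst c
  | .cas θ t => .cas (fun c => substO u k (θ c)) (subst u k t)
def substO (u : Tm n) (k : ℕ) : Ob n → Ob n
  | .none => .none
  | .some t => .some (subst u k t)
end

/- `{θ}·(-)` applied inside an optional branch. -/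
def casO (θ : Fin n → Ob n) : Ob n → Ob n
  | .none => .none
  | .some u => .some (.cas θ u)

/- Composition of case-bindings: `(θ∘φ)(c) = {θ}·φ(c)` for `c ∈ dom φ`. -/
def compB (θ φ : Fin n → Ob n) : Fin n → Ob n := fun c => casO θ (φ c)

/- One-step reduction of the lambda calculus with constructors:
AppLam, LamApp, CaseCons, CaseApp, CaseLam, CaseCase, closed under all contexts. -/
inductive Step : Tm n → Tm n → Prop where
  | appLam (t u : Tm n) : Step (.app (.lam t) u) (subst u 0 t)
  | lamApp (t : Tm n) : Step (.lam (.app (lift 1 0 t) (.var 0))) t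
  | caseCons (θ : Fin n → Ob n) (c : Fin n) (u : Tm n) :
      θ c = .some u → Step (.cas θ (.cst c)) u
  | caseApp (θ : Fin n → Ob n) (t u : Tm n) :
      Step (.cas θ (.app t u)) (.app (.cas θ t) u)
  | caseLam (θ : Fin n → Ob n) (t : Tm n) :
      Step (.cas θ (.lam t)) (.lam (.cas (liftB θ) t))
  | caseCase (θ φ : Fin n → Ob n) (t : Tm n) :
      Step (.cas θ (.cas φ t)) (.cas (compB θ φ) t)
  | appL {t t' : Tm n} (u : Tm n) : Step t t' → Step (.app t u) (.app t' u)
  | appR (t : Tm n) {u u' : Tm n} : Step u u' → Step (.app t u) (.app t u')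
  | lamC {t t' : Tm n} : Step t t' → Step (.lam t) (.lam t')
  | casT (θ : Fin n → Ob n) {t t' : Tm n} : Step t t' → Step (.cas θ t) (.cas θ t')
  | casB (θ : Fin n → Ob n) (c : Fin n) {u u' : Tm n} (t : Tm n) :
      θ c = .some u → Step u u' →
      Step (.cas θ t) (.cas (Function.update θ c (.some u')) t)

/- One-step reduction by the CaseCase rule only (closed under all contexts). -/
inductive StepCC : Tm n → Tm n → Prop where
  | caseCase (θ φ : Fin n → Ob n) (t : Tm n) :
      StepCC (.cas θ (.cas φ t)) (.cas (compB θ φ) t)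
  | appL {t t' : Tm n} (u : Tm n) : StepCC t t' → StepCC (.app t u) (.app t' u)
  | appR (t : Tm n) {u u' : Tm n} : StepCC u u' → StepCC (.app t u) (.app t u')
  | lamC {t t' : Tm n} : StepCC t t' → StepCC (.lam t) (.lam t')
  | casT (θ : Fin n → Ob n) {t t' : Tm n} : StepCC t t' → StepCC (.cas θ t) (.cas θ t')
  | casB (θ : Fin n → Ob n) (c : Fin n) {u u' : Tm n} (t : Tm n) :
      θ c = .some u → StepCC u u' →
      StepCC (.cas θ t) (.cas (Function.update θ c (.some u')) t)

/- One-step reduction λC⁻ : every rule except CaseCase (closed under all contexts). -/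
inductive StepM : Tm n → Tm n → Prop where
  | appLam (t u : Tm n) : StepM (.app (.lam t) u) (subst u 0 t)
  | lamApp (t : Tm n) : StepM (.lam (.app (lift 1 0 t) (.var 0))) t
  | caseCons (θ : Fin n → Ob n) (c : Fin n) (u : Tm n) :
      θ c = .some u → StepM (.cas θ (.cst c)) u
  | caseApp (θ : Fin n → Ob n) (t u : Tm n) :
      StepM (.cas θ (.app t u)) (.app (.cas θ t) u)
  | caseLam (θ : Fin n → Ob n) (t : Tm n) :
      StepM (.cas θ (.lam t)) (.lam (.cas (liftB θ) t))
  | appL {t t' : Tm n} (u : Tm n) : StepM t t' → StepM (.app t u) (.app t' u)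
  | appR (t : Tm n) {u u' : Tm n} : StepM u u' → StepM (.app t u) (.app t u')
  | lamC {t t' : Tm n} : StepM t t' → StepM (.lam t) (.lam t')
  | casT (θ : Fin n → Ob n) {t t' : Tm n} : StepM t t' → StepM (.cas θ t) (.cas θ t')
  | casB (θ : Fin n → Ob n) (c : Fin n) {u u' : Tm n} (t : Tm n) :
      θ c = .some u → StepM u u' →
      StepM (.cas θ t) (.cas (Function.update θ c (.some u')) t)

/- A term is defined when none of its subterms is a match failure `{θ}·c` with
`c ∉ dom θ`. -/
inductive Defined : Tm n → Prop where
  | var (i : ℕ) : Defined (.var i)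
  | cst (c : Fin n) : Defined (.cst c)
  | app {t u : Tm n} : Defined t → Defined u → Defined (.app t u)
  | lam {t : Tm n} : Defined t → Defined (.lam t)
  | cas {θ : Fin n → Ob n} {t : Tm n} :
      (∀ c u, θ c = .some u → Defined u) → Defined t →
      (∀ c, t = .cst c → θ c ≠ .none) → Defined (.cas θ t)

/- Hereditarily defined: every reduct (in any number of steps) is defined. -/
def HD (t : Tm n) : Prop := ∀ u, Relation.ReflTransGen Step t u → Defined u

section Completion
variable [NeZero n]

/- The canonical match failure `{}·c₁` used to fill missing branches. -/
def failTm : Tm n := .cas (fun _ => .none) (.cst 0)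

/- Case-completion: replace every case-binding by its total completion,
filling each missing branch with `{}·c₁`. -/
mutual
def cpl : Tm n → Tm n
  | .var i => .var i
  | .app t u => .app (cpl t) (cpl u)
  | .lam t => .lam (cpl t)
  | .cst c => .cst c
  | .cas θ t => .cas (fun c => .some (cplO (θ c))) (cpl t)
def cplO : Ob n → Tm n
  | .none => failTm
  | .some u => cpl u
end

end Completion

/- The structural measure μ. -/
mutual
def mes : Tm n → ℕ
  | .var _ => 1
  | .cst _ => 1
  | .lam t => mes t + 1
  | .app t u => mes t + mes u
  | .cas θ t => mes t * ((∑ c : Fin n, mesO (θ c)) + 2)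
def mesO : Ob n → ℕ
  | .none => 0
  | .some t => mes t
end

end LC


/-! Completion commutes with lifting and substitution, and an equation `⌈t⌉ = s` can be inverted
one constructor of `s` at a time (a lifted completion is the completion of a lifted term, which
handles η). Hence every λC⁻ redex of `⌈t⌉` is the completion of a redex of `t` at the same
position, and its contractum is the completion of the contractum in `t`. The only other
candidates are redexes inside a filler `{}·c₁`, which is normal, and a match `{θ}·c` whose
branch `c` was filled in, which cannot occur in a defined term. -/

namespace LC

section

variable {n : ℕ} [NeZero n]

mutual
theorem cpl_lift (d : ℕ) : ∀ (t : Tm n) (k : ℕ), cpl (lift d k t) = lift d k (cpl t)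
  | .var _, _ | .cst _, _ => rfl
  | .app t u, k => by rw [lift, cpl, cpl, lift, cpl_lift d t, cpl_lift d u]
  | .lam t, k => by rw [lift, cpl, cpl, lift, cpl_lift d t]
  | .cas θ t, k => by
    simp only [lift, cpl, cpl_lift d t k]
    exact congrArg₂ _ (funext fun c => congrArg _ (cplO_liftO d (θ c) k)) rfl
theorem cplO_liftO (d : ℕ) : ∀ (o : Ob n) (k : ℕ), cplO (liftO d k o) = lift d k (cplO o)
  | .none, _ => rfl
  | .some t, k => cpl_lift d t k
end

mutual
theorem cpl_subst (u : Tm n) : ∀ (t : Tm n) (k : ℕ), cpl (subst u k t) = subst (cpl u) k (cpl t)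
  | .var i, k => by simp only [subst, cpl]; split_ifs <;> simp only [cpl, cpl_lift]
  | .app t v, k => by rw [subst, cpl, cpl, subst, cpl_subst u t, cpl_subst u v]
  | .lam t, k => by rw [subst, cpl, cpl, subst, cpl_subst u t]
  | .cst _, _ => rfl
  | .cas θ t, k => by
    simp only [subst, cpl, cpl_subst u t k]
    exact congrArg₂ _ (funext fun c => congrArg _ (cplO_substO u (θ c) k)) rfl
theorem cplO_substO (u : Tm n) :
    ∀ (o : Ob n) (k : ℕ), cplO (substO u k o) = subst (cpl u) k (cplO o)
  | .none, _ => rfl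
  | .some t, k => cpl_subst u t k
end

theorem cpl_eq_var {t : Tm n} {i : ℕ} (h : cpl t = .var i) : t = .var i := by
  cases t <;> simp_all [cpl]

theorem cpl_eq_cst {t : Tm n} {c : Fin n} (h : cpl t = .cst c) : t = .cst c := by
  cases t <;> simp_all [cpl]

theorem cpl_eq_app {t a b : Tm n} (h : cpl t = .app a b) :
    ∃ t₁ t₂, t = .app t₁ t₂ ∧ cpl t₁ = a ∧ cpl t₂ = b := by
  cases t <;> simp_all [cpl]

theorem cpl_eq_lam {t a : Tm n} (h : cpl t = .lam a) : ∃ t₁, t = .lam t₁ ∧ cpl t₁ = a := by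
  cases t <;> simp_all [cpl]

theorem cpl_eq_cas {t a : Tm n} {φ : Fin n → Ob n} (h : cpl t = .cas φ a) :
    ∃ θ t₁, t = .cas θ t₁ ∧ (fun c => .some (cplO (θ c))) = φ ∧ cpl t₁ = a := by
  cases t <;> simp_all [cpl]

theorem eq_failTm_of_lift_eq_failTm {d k : ℕ} {s : Tm n} (h : lift d k s = failTm) :
    s = failTm := by
  cases s <;> simp only [lift, failTm, reduceCtorEq, Tm.cas.injEq, funext_iff] at h
  rename_i φ v
  have hφ : φ = fun _ => .none := funext fun c => by
    have := h.1 c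
    cases hc : φ c <;> simp_all [liftO]
  cases v <;> simp_all [lift, failTm]

mutual
theorem exists_lift_of_cpl_eq_lift (d : ℕ) :
    ∀ (a : Tm n) (k : ℕ) (s : Tm n), cpl a = lift d k s → ∃ a₀, a = lift d k a₀ ∧ cpl a₀ = s
  | .var i, k, s, h => by
    cases s <;> simp only [cpl, lift, reduceCtorEq, Tm.var.injEq] at h
    exact ⟨.var _, by rw [lift, h], rfl⟩
  | .app t u, k, s, h => by
    cases s <;> simp only [cpl, lift, reduceCtorEq, Tm.app.injEq] at h
    obtain ⟨t₀, rfl, rfl⟩ := exists_lift_of_cpl_eq_lift d t k _ h.1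
    obtain ⟨u₀, rfl, rfl⟩ := exists_lift_of_cpl_eq_lift d u k _ h.2
    exact ⟨.app t₀ u₀, rfl, rfl⟩
  | .lam t, k, s, h => by
    cases s <;> simp only [cpl, lift, reduceCtorEq, Tm.lam.injEq] at h
    obtain ⟨t₀, rfl, rfl⟩ := exists_lift_of_cpl_eq_lift d t (k + 1) _ h
    exact ⟨.lam t₀, rfl, rfl⟩
  | .cst c, k, s, h => by
    cases s <;> simp only [cpl, lift, reduceCtorEq, Tm.cst.injEq] at h
    exact ⟨.cst c, rfl, by rw [cpl, h]⟩
  | .cas θ t, k, s, h => by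
    cases s <;> simp only [cpl, lift, reduceCtorEq, Tm.cas.injEq, funext_iff] at h
    rename_i φ v
    have hθ : ∀ c, ∃ o₀, θ c = liftO d k o₀ ∧ Ob.some (cplO o₀) = φ c := by
      intro c
      have hc := h.1 c
      cases hφ : φ c with
      | none => simp [hφ, liftO] at hc
      | some w =>
        rw [hφ, liftO, Ob.some.injEq] at hc
        obtain ⟨o₀, h₁, h₂⟩ := exists_liftO_of_cplO_eq_lift d (θ c) k w hc
        exact ⟨o₀, h₁, congrArg _ h₂⟩
    choose θ₀ hθ₀ hφ₀ using hθ
    obtain ⟨t₀, rfl, rfl⟩ := exists_lift_of_cpl_eq_lift d t k v h.2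
    exact ⟨.cas θ₀ t₀, by rw [lift, ← funext hθ₀], by rw [cpl, funext hφ₀]⟩
theorem exists_liftO_of_cplO_eq_lift (d : ℕ) :
    ∀ (o : Ob n) (k : ℕ) (s : Tm n), cplO o = lift d k s → ∃ o₀, o = liftO d k o₀ ∧ cplO o₀ = s
  | .none, _, _, h => ⟨.none, rfl, (eq_failTm_of_lift_eq_failTm h.symm).symm⟩
  | .some t, k, s, h =>
    let ⟨t₀, h₁, h₂⟩ := exists_lift_of_cpl_eq_lift d t k s h
    ⟨.some t₀, by rw [h₁, liftO], h₂⟩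
end

theorem not_stepM_failTm {u : Tm n} : ¬StepM failTm u := by
  intro h
  cases h with
  | caseCons _ _ _ h | casB _ _ _ h => cases h
  | casT _ h => cases h

theorem liftB_cpl (θ : Fin n → Ob n) :
    liftB (fun c => .some (cplO (θ c))) = fun c => .some (cplO (liftB θ c)) :=
  funext fun c => congrArg Ob.some (cplO_liftO 1 (θ c) 0).symm

theorem update_cpl (θ : Fin n → Ob n) (c : Fin n) (o : Ob n) :
    Function.update (fun c => Ob.some (cplO (θ c))) c (.some (cplO o)) =
      fun c' => .some (cplO (Function.update θ c o c')) :=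
  funext fun c' => (Function.apply_update (fun _ o => Ob.some (cplO o)) θ c o c').symm

theorem exists_step_of_cpl_eq_appLam {t s u : Tm n} (h : cpl t = .app (.lam s) u) :
    ∃ t₀, subst u 0 s = cpl t₀ ∧ Step t t₀ := by
  obtain ⟨_, u₀, rfl, hl, rfl⟩ := cpl_eq_app h
  obtain ⟨s₀, rfl, rfl⟩ := cpl_eq_lam hl
  exact ⟨_, (cpl_subst u₀ s₀ 0).symm, .appLam s₀ u₀⟩

theorem exists_step_of_cpl_eq_lamApp {t s : Tm n}
    (h : cpl t = .lam (.app (lift 1 0 s) (.var 0))) : ∃ t₀, s = cpl t₀ ∧ Step t t₀ := by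
  obtain ⟨_, rfl, ha⟩ := cpl_eq_lam h
  obtain ⟨p, q, rfl, hp, hq⟩ := cpl_eq_app ha
  obtain ⟨s₀, rfl, rfl⟩ := exists_lift_of_cpl_eq_lift 1 p 0 s hp
  rw [cpl_eq_var hq]
  exact ⟨s₀, rfl, .lamApp s₀⟩

theorem exists_step_of_cpl_eq_caseCons {t v : Tm n} {φ : Fin n → Ob n} {c : Fin n}
    (ht : Defined t) (h : cpl t = .cas φ (.cst c)) (hv : φ c = .some v) :
    ∃ t₀, v = cpl t₀ ∧ Step t t₀ := by
  obtain ⟨θ, _, rfl, rfl, hc⟩ := cpl_eq_cas h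
  obtain rfl := cpl_eq_cst hc
  cases ht with | cas _ _ hne =>
  cases hw : θ c with
  | none => exact absurd hw (hne c rfl)
  | some w =>
    simp only [hw, cplO, Ob.some.injEq] at hv
    exact ⟨w, hv.symm, .caseCons θ c w hw⟩

theorem exists_step_of_cpl_eq_caseApp {t s u : Tm n} {φ : Fin n → Ob n}
    (h : cpl t = .cas φ (.app s u)) : ∃ t₀, .app (.cas φ s) u = cpl t₀ ∧ Step t t₀ := by
  obtain ⟨θ, _, rfl, rfl, hc⟩ := cpl_eq_cas h
  obtain ⟨p, q, rfl, rfl, rfl⟩ := cpl_eq_app hc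
  exact ⟨.app (.cas θ p) q, rfl, .caseApp θ p q⟩

theorem exists_step_of_cpl_eq_caseLam {t s : Tm n} {φ : Fin n → Ob n}
    (h : cpl t = .cas φ (.lam s)) : ∃ t₀, .lam (.cas (liftB φ) s) = cpl t₀ ∧ Step t t₀ := by
  obtain ⟨θ, _, rfl, rfl, hc⟩ := cpl_eq_cas h
  obtain ⟨p, rfl, rfl⟩ := cpl_eq_lam hc
  exact ⟨.lam (.cas (liftB θ) p), by rw [cpl, cpl, liftB_cpl], .caseLam θ p⟩

theorem exists_step_of_stepM_of_cpl_eq {a t' t : Tm n} (h : StepM a t') (ht : Defined t)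
    (hs : cpl t = a) : ∃ t₀, t' = cpl t₀ ∧ Step t t₀ := by
  induction h generalizing t with
  | appLam => exact exists_step_of_cpl_eq_appLam hs
  | lamApp => exact exists_step_of_cpl_eq_lamApp hs
  | caseCons _ _ _ hv => exact exists_step_of_cpl_eq_caseCons ht hs hv
  | caseApp => exact exists_step_of_cpl_eq_caseApp hs
  | caseLam => exact exists_step_of_cpl_eq_caseLam hs
  | appL _ _ ih =>
    obtain ⟨t₁, t₂, rfl, h₁, rfl⟩ := cpl_eq_app hs
    cases ht with | app d₁ _ =>
    obtain ⟨t₀, rfl, st⟩ := ih d₁ h₁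
    exact ⟨.app t₀ t₂, rfl, .appL t₂ st⟩
  | appR _ _ ih =>
    obtain ⟨t₁, t₂, rfl, rfl, h₂⟩ := cpl_eq_app hs
    cases ht with | app _ d₂ =>
    obtain ⟨t₀, rfl, st⟩ := ih d₂ h₂
    exact ⟨.app t₁ t₀, rfl, .appR t₁ st⟩
  | lamC _ ih =>
    obtain ⟨t₁, rfl, h₁⟩ := cpl_eq_lam hs
    cases ht with | lam d₁ =>
    obtain ⟨t₀, rfl, st⟩ := ih d₁ h₁
    exact ⟨.lam t₀, rfl, .lamC st⟩
  | casT _ _ ih =>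
    obtain ⟨θ, t₁, rfl, rfl, h₁⟩ := cpl_eq_cas hs
    cases ht with | cas _ d₁ _ =>
    obtain ⟨t₀, rfl, st⟩ := ih d₁ h₁
    exact ⟨.cas θ t₀, rfl, .casT θ st⟩
  | casB _ c _ hv hstep ih =>
    obtain ⟨θ, t₁, rfl, rfl, rfl⟩ := cpl_eq_cas hs
    cases ht with | cas hθ _ _ =>
    cases hw : θ c with
    | none =>
      simp only [hw, cplO, Ob.some.injEq] at hv
      exact absurd (hv ▸ hstep) not_stepM_failTm
    | some w =>
      simp only [hw, cplO, Ob.some.injEq] at hv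
      obtain ⟨w₀, rfl, sw⟩ := ih (hθ c w hw) hv
      refine ⟨.cas (Function.update θ c (.some w₀)) t₁, ?_, .casB θ c t₁ hw sw⟩
      rw [cpl, ← update_cpl]
      rfl

end

/-- Reduction of completed terms (non-CaseCase steps): if `t` is defined and
`⌈t⌉` reduces in one λC⁻ step (any rule but CaseCase) to `t'`, then `t' = ⌈t₀⌉`
for some `t₀` with `t → t₀`. -/
theorem cpl_stepM {n : ℕ} [NeZero n] {t t' : Tm n}
    (ht : Defined t) (h : StepM (cpl t) t') :
    ∃ t₀ : Tm n, t' = cpl t₀ ∧ Step t t₀ :=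
  exists_step_of_stepM_of_cpl_eq h ht rfl

end LC
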